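/- Assume (D+) and let (V,u) be a weak solution of either the Lifshitz–Slyozov system or the Lifshitz–Slyozov system with nucleation, with total mass M and V₀ > d(0) (so that d(0) < V(t) ≤ M for all t, and d^{−1} is well defined on [d(0),∞)). Let k : [0,∞) → [0,∞) be C¹ and convex with |k(x)| ≤ C(1+x²) and |k'(x)| ≤ C(1+x) for some constant C, and with k(0) = 0 in the nucleation case. Define K(v) := ∫_{d(0)}^v k'(d^{−1}(s)) ds and H_k(t) := ∫₀^∞ k(x) u(t,x) dx + K(V(t)). Then H_k is differentiable on [0,∞) and for all t ≥ 0: H_k'(t) = ∫₀^∞ u(t,x) (V(t) − d(x)) ( k'(x) − k'(d^{−1}(V(t))) ) dx ≤ 0. -/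

import Mathlib

open Set Filter Topology MeasureTheory

/-- Assumption (D+): `d : [0,∞) → [0,∞)` is C¹ with `0 < α ≤ d'(x) ≤ β` for all `x ≥ 0`. -/
structure DPlus (d d' : ℝ → ℝ) (α β : ℝ) : Prop where
  nonneg : ∀ x ∈ Set.Ici (0:ℝ), 0 ≤ d x
  hasDeriv : ∀ x ∈ Set.Ici (0:ℝ), HasDerivWithinAt d (d' x) (Set.Ici 0) x
  contDeriv : ContinuousOn d' (Set.Ici 0)
  alpha_pos : 0 < α
  deriv_lb : ∀ x ∈ Set.Ici (0:ℝ), α ≤ d' x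
  deriv_ub : ∀ x ∈ Set.Ici (0:ℝ), d' x ≤ β

/-- A C¹ test function `φ` (with derivative `φ'`) on `[0,∞)` satisfying
`|φ(x)| ≤ C(1+x²)` and `|φ'(x)| ≤ C(1+x)` for some constant `C`. -/
def IsTest (φ φ' : ℝ → ℝ) : Prop :=
  (∀ x ∈ Set.Ici (0:ℝ), HasDerivWithinAt φ (φ' x) (Set.Ici 0) x) ∧
  ContinuousOn φ' (Set.Ici 0) ∧
  ∃ C : ℝ, ∀ x ∈ Set.Ici (0:ℝ), |φ x| ≤ C * (1 + x ^ 2) ∧ |φ' x| ≤ C * (1 + x)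

/-- Weak solution of the Lifshitz–Slyozov system with nucleation parameter `ε`
(`ε = 0`: no nucleation; `ε = 1`: nucleation with nucleus size `i0`) and total mass `M`:
`V` is C¹ on `[0,∞)`, `u(t,·) ≥ 0` with `(1+x²)u(t,x)` integrable, mass conservation
`V(t) + ∫₀^∞ x u(t,x) dx = M` holds, and for every test function `φ`,
`d/dt ∫₀^∞ φ(x)u(t,x)dx = ∫₀^∞ φ'(x)(V(t)−d(x))u(t,x)dx + ε φ(0) V(t)^{i0}`. -/
structure WeakSolLSN (d : ℝ → ℝ) (M ε : ℝ) (i0 : ℕ) (V : ℝ → ℝ) (u : ℝ → ℝ → ℝ) : Prop where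
  u_nonneg : ∀ t ∈ Set.Ici (0:ℝ), ∀ x ∈ Set.Ici (0:ℝ), 0 ≤ u t x
  V_contDiff : ContDiffOn ℝ 1 V (Set.Ici 0)
  u_int : ∀ t ∈ Set.Ici (0:ℝ), IntegrableOn (fun x => (1 + x ^ 2) * u t x) (Set.Ioi 0)
  mass : ∀ t ∈ Set.Ici (0:ℝ), V t + ∫ x in Set.Ioi (0:ℝ), x * u t x = M
  weak : ∀ φ φ' : ℝ → ℝ, IsTest φ φ' → ∀ t ∈ Set.Ici (0:ℝ),
    HasDerivWithinAt (fun s => ∫ x in Set.Ioi (0:ℝ), φ x * u s x)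
      ((∫ x in Set.Ioi (0:ℝ), φ' x * (V t - d x) * u t x) + ε * φ 0 * V t ^ i0)
      (Set.Ici 0) t

/-!
Testing the weak formulation against `k` gives `d/dt ∫ k u = ∫ k'(x)(V - d(x)) u` (the nucleation
term vanishes because `k(0) = 0` when `ε = 1`); testing it against `x` and using mass conservation
gives `V' = -∫ (V - d(x)) u`, so by the chain rule `K(V)' = -k'(d⁻¹V) ∫ (V - d(x)) u`. The sum is
the claimed formula, and its integrand is `≤ 0` because `d` and `k'` (the derivative of a convex
function) are both nondecreasing, so `V - d(x) = d(d⁻¹V) - d(x)` and `k'(x) - k'(d⁻¹V)` have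
opposite signs. That `d⁻¹V` makes sense, i.e. `V > d(0)` at all times, is a Gronwall argument:
since `d ≥ d(0)`, `(V - d(0))' ≥ -ρ (V - d(0))`.
-/

lemma monotoneOn_Ici_of_hasDerivWithinAt_nonneg {f f' : ℝ → ℝ} {a : ℝ}
    (hf : ∀ x ∈ Ici a, HasDerivWithinAt f (f' x) (Ici a) x) (hf' : ∀ x ∈ Ioi a, 0 ≤ f' x) :
    MonotoneOn f (Ici a) :=
  monotoneOn_of_hasDerivWithinAt_nonneg (convex_Ici a)
    (fun x hx => (hf x hx).continuousWithinAt)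
    (fun x hx => by
      rw [interior_Ici] at hx ⊢
      exact (hf x (Ioi_subset_Ici_self hx)).mono Ioi_subset_Ici_self)
    (fun x hx => by rw [interior_Ici] at hx; exact hf' x hx)

lemma ConvexOn.monotoneOn_of_hasDerivWithinAt {s : Set ℝ} {f f' : ℝ → ℝ} (hf : ConvexOn ℝ s f)
    (hf' : ∀ x ∈ s, HasDerivWithinAt f (f' x) s x) : MonotoneOn f' s := by
  intro a ha b hb hab
  rcases hab.lt_or_eq with hlt | rfl
  · exact (hf.le_slope_of_hasDerivWithinAt ha hb hlt (hf' a ha)).trans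
      (hf.slope_le_of_hasDerivWithinAt ha hb hlt (hf' b hb))
  · exact le_rfl

lemma pos_of_neg_mul_le_hasDerivWithinAt {W W' r : ℝ → ℝ} {a : ℝ} (hr : ContinuousOn r (Ici a))
    (hW : ∀ t ∈ Ici a, HasDerivWithinAt W (W' t) (Ici a) t)
    (hW' : ∀ t ∈ Ici a, -r t * W t ≤ W' t) (ha : 0 < W a) {t : ℝ} (ht : t ∈ Ici a) :
    0 < W t := by
  set P : ℝ → ℝ := fun t => ∫ s in a..t, r (max s a)
  have hr_max : Continuous fun s => r (max s a) :=
    hr.comp_continuous (continuous_id.max continuous_const) fun s => le_max_right s a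
  have hP : ∀ t ∈ Ici a, HasDerivWithinAt P (r t) (Ici a) t := fun t ht => by
    simpa [max_eq_left (mem_Ici.1 ht)] using
      ((hr_max.integral_hasStrictDerivAt a t).hasDerivAt).hasDerivWithinAt
  have hmono : MonotoneOn (fun t => W t * Real.exp (P t)) (Ici a) :=
    monotoneOn_Ici_of_hasDerivWithinAt_nonneg
      (fun t ht => (hW t ht).mul (hP t ht).exp)
      (fun t ht => by
        have := hW' t (Ioi_subset_Ici_self ht)
        have := Real.exp_pos (P t)
        nlinarith)
  have h := hmono self_mem_Ici ht ht
  simp only [P, intervalIntegral.integral_same, Real.exp_zero, mul_one] at h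
  exact pos_of_mul_pos_left (ha.trans_le h) (Real.exp_pos _).le

lemma HasDerivWithinAt.intervalIntegral_comp {f V : ℝ → ℝ} {a V' t : ℝ} {s : Set ℝ}
    (hf : ContinuousOn f (Ici a)) (hV : HasDerivWithinAt V V' s t) (ha : a < V t) :
    HasDerivWithinAt (fun τ => ∫ v in a..V τ, f v) (f (V t) * V') s t := by
  have hFTC : HasDerivAt (fun w => ∫ v in a..w, f v) (f (V t)) (V t) :=
    intervalIntegral.integral_hasDerivAt_right
      ((hf.mono (uIcc_of_le ha.le ▸ Icc_subset_Ici_self)).intervalIntegrable)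
      ((hf.mono Ioi_subset_Ici_self).stronglyMeasurableAtFilter isOpen_Ioi _ ha)
      ((hf _ ha.le).continuousAt (Ici_mem_nhds ha))
  exact hFTC.comp_hasDerivWithinAt t hV

lemma integrableOn_mul_of_abs_le {u w : ℝ → ℝ} {c : ℝ}
    (hu : IntegrableOn (fun x => (1 + x ^ 2) * u x) (Ioi 0)) (hu0 : ∀ x ∈ Ioi (0:ℝ), 0 ≤ u x)
    (hw : ContinuousOn w (Ioi 0)) (hwb : ∀ x ∈ Ioi (0:ℝ), |w x| ≤ c * (1 + x) ^ 2) :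
    IntegrableOn (fun x => w x * u x) (Ioi 0) := by
  have hu_meas : AEStronglyMeasurable u (volume.restrict (Ioi 0)) := by
    have hpos : ∀ x : ℝ, (1 + x ^ 2) ≠ 0 := fun x => by positivity
    have hinv : Continuous fun x : ℝ => (1 + x ^ 2)⁻¹ := by fun_prop (disch := exact hpos _)
    refine (hinv.aestronglyMeasurable.mul hu.aestronglyMeasurable).congr (ae_of_all _ fun x => ?_)
    exact inv_mul_cancel_left₀ (hpos x) (u x)
  refine Integrable.mono' (hu.const_mul (2 * |c|))
    ((hw.aestronglyMeasurable measurableSet_Ioi).mul hu_meas) ?_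
  filter_upwards [ae_restrict_mem measurableSet_Ioi] with x hx
  rw [norm_mul, Real.norm_eq_abs, Real.norm_eq_abs, abs_of_nonneg (hu0 x hx)]
  have hc : c * (1 + x) ^ 2 ≤ 2 * |c| * (1 + x ^ 2) := by
    nlinarith [le_abs_self c, abs_nonneg c, sq_nonneg (1 - x), sq_nonneg (1 + x)]
  nlinarith [hwb x hx, hu0 x hx]

lemma isTest_one : IsTest (fun _ => 1) (fun _ => 0) :=
  ⟨fun x _ => hasDerivWithinAt_const x _ 1, continuousOn_const, 1, fun x hx => by
    simp only [abs_one, abs_zero, one_mul]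
    exact ⟨by nlinarith [sq_nonneg x], by linarith [mem_Ici.1 hx]⟩⟩

lemma isTest_id : IsTest id (fun _ => 1) :=
  ⟨fun x _ => hasDerivWithinAt_id x _, continuousOn_const, 1, fun x hx => by
    rw [id, abs_of_nonneg (mem_Ici.1 hx), abs_one, one_mul, one_mul]
    exact ⟨by nlinarith [sq_nonneg (x - 1)], by linarith [mem_Ici.1 hx]⟩⟩

namespace DPlus

variable {d d' : ℝ → ℝ} {α β : ℝ}

lemma mul_sub_le_sub (hD : DPlus d d' α β) {a b : ℝ} (ha : 0 ≤ a) (hab : a ≤ b) :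
    α * (b - a) ≤ d b - d a := by
  have hmono : MonotoneOn (fun x => d x - α * x) (Ici 0) :=
    monotoneOn_Ici_of_hasDerivWithinAt_nonneg
      (fun x hx => (hD.hasDeriv x hx).sub ((hasDerivWithinAt_id x _).const_mul α))
      (fun x hx => by linarith [hD.deriv_lb x (Ioi_subset_Ici_self hx)])
  linarith [hmono ha (ha.trans hab) hab]

lemma sub_le_mul_sub (hD : DPlus d d' α β) {a b : ℝ} (ha : 0 ≤ a) (hab : a ≤ b) :
    d b - d a ≤ β * (b - a) := by
  have hmono : MonotoneOn (fun x => β * x - d x) (Ici 0) :=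
    monotoneOn_Ici_of_hasDerivWithinAt_nonneg
      (fun x hx => ((hasDerivWithinAt_id x _).const_mul β).sub (hD.hasDeriv x hx))
      (fun x hx => by linarith [hD.deriv_ub x (Ioi_subset_Ici_self hx)])
  linarith [hmono ha (ha.trans hab) hab]

lemma monotoneOn (hD : DPlus d d' α β) : MonotoneOn d (Ici 0) := fun a ha _ _ hab => by
  nlinarith [hD.mul_sub_le_sub ha hab, hD.alpha_pos]

lemma continuousOn (hD : DPlus d d' α β) : ContinuousOn d (Ici 0) :=
  fun x hx => (hD.hasDeriv x hx).continuousWithinAt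

lemma beta_nonneg (hD : DPlus d d' α β) : 0 ≤ β :=
  (hD.alpha_pos.trans_le (hD.deriv_lb 0 self_mem_Ici)).le.trans (hD.deriv_ub 0 self_mem_Ici)

lemma abs_sub_le (hD : DPlus d d' α β) (v : ℝ) {x : ℝ} (hx : 0 ≤ x) :
    |v - d x| ≤ (|v| + d 0 + β) * (1 + x) := by
  have hdx := hD.nonneg x hx
  have h0 := hD.nonneg 0 self_mem_Ici
  have hβ := hD.beta_nonneg
  have hgrowth := hD.sub_le_mul_sub le_rfl hx
  rw [abs_le]
  constructor <;> nlinarith [le_abs_self v, neg_abs_le v, abs_nonneg v]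

lemma abs_dinv_sub_le (hD : DPlus d d' α β) {dinv : ℝ → ℝ}
    (hdinv : ∀ v ∈ Ici (d 0), 0 ≤ dinv v ∧ d (dinv v) = v) {v w : ℝ} (hv : v ∈ Ici (d 0))
    (hw : w ∈ Ici (d 0)) : |dinv v - dinv w| ≤ α⁻¹ * |v - w| := by
  wlog hle : dinv w ≤ dinv v generalizing v w
  · rw [abs_sub_comm, abs_sub_comm v]
    exact this hw hv (le_of_not_ge hle)
  obtain ⟨hv0, hdv⟩ := hdinv v hv
  obtain ⟨hw0, hdw⟩ := hdinv w hw
  have h := hD.mul_sub_le_sub hw0 hle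
  rw [hdv, hdw] at h
  have hα := hD.alpha_pos
  rw [abs_of_nonneg (sub_nonneg.2 hle), abs_of_nonneg (by nlinarith), le_inv_mul_iff₀ hα]
  exact h

lemma continuousOn_dinv (hD : DPlus d d' α β) {dinv : ℝ → ℝ}
    (hdinv : ∀ v ∈ Ici (d 0), 0 ≤ dinv v ∧ d (dinv v) = v) : ContinuousOn dinv (Ici (d 0)) :=
  (LipschitzOnWith.of_dist_le' (K := α⁻¹) fun _ hv _ hw => by
    simpa only [Real.dist_eq] using hD.abs_dinv_sub_le hdinv hv hw).continuousOn

end DPlus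

namespace WeakSolLSN

variable {d : ℝ → ℝ} {M ε : ℝ} {i0 : ℕ} {V : ℝ → ℝ} {u : ℝ → ℝ → ℝ}

lemma integrableOn_mul (hsol : WeakSolLSN d M ε i0 V u) {t : ℝ} (ht : t ∈ Ici 0) {w : ℝ → ℝ}
    {c : ℝ} (hw : ContinuousOn w (Ioi 0)) (hwb : ∀ x ∈ Ioi (0:ℝ), |w x| ≤ c * (1 + x) ^ 2) :
    IntegrableOn (fun x => w x * u t x) (Ioi 0) :=
  integrableOn_mul_of_abs_le (hsol.u_int t ht)
    (fun x hx => hsol.u_nonneg t ht x (Ioi_subset_Ici_self hx)) hw hwb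

lemma integrableOn (hsol : WeakSolLSN d M ε i0 V u) {t : ℝ} (ht : t ∈ Ici 0) :
    IntegrableOn (u t) (Ioi 0) := by
  simpa using hsol.integrableOn_mul ht (w := fun _ => 1) (c := 1) continuousOn_const
    fun x hx => by rw [abs_one, one_mul]; nlinarith [mem_Ioi.1 hx]

lemma integrableOn_drift {d' : ℝ → ℝ} {α β : ℝ} (hD : DPlus d d' α β)
    (hsol : WeakSolLSN d M ε i0 V u) {t : ℝ} (ht : t ∈ Ici 0) {g : ℝ → ℝ} {C : ℝ}
    (hg : ContinuousOn g (Ici 0)) (hgb : ∀ x ∈ Ici (0:ℝ), |g x| ≤ C * (1 + x)) :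
    IntegrableOn (fun x => g x * (V t - d x) * u t x) (Ioi 0) := by
  refine hsol.integrableOn_mul ht ((hg.mul (continuousOn_const.sub hD.continuousOn)).mono
    Ioi_subset_Ici_self) (c := C * (|V t| + d 0 + β)) fun x hx => ?_
  have hx0 : (0:ℝ) ≤ x := le_of_lt hx
  calc |g x * (V t - d x)| ≤ (C * (1 + x)) * ((|V t| + d 0 + β) * (1 + x)) := by
        rw [abs_mul]
        exact mul_le_mul (hgb x hx0) (hD.abs_sub_le (V t) hx0) (abs_nonneg _)
          ((abs_nonneg _).trans (hgb x hx0))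
    _ = C * (|V t| + d 0 + β) * (1 + x) ^ 2 := by ring

lemma integrableOn_sub_mul {d' : ℝ → ℝ} {α β : ℝ} (hD : DPlus d d' α β)
    (hsol : WeakSolLSN d M ε i0 V u) {t : ℝ} (ht : t ∈ Ici 0) :
    IntegrableOn (fun x => (V t - d x) * u t x) (Ioi 0) := by
  simpa using hsol.integrableOn_drift hD ht (g := fun _ => 1) (C := 1) continuousOn_const
    fun x hx => by rw [abs_one, one_mul]; linarith [mem_Ici.1 hx]

lemma hasDerivWithinAt_V (hsol : WeakSolLSN d M ε i0 V u) {t : ℝ} (ht : t ∈ Ici 0) :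
    HasDerivWithinAt V (-∫ x in Ioi (0:ℝ), (V t - d x) * u t x) (Ici 0) t := by
  have h := (hsol.weak _ _ isTest_id t ht).const_sub M
  simp only [id, one_mul, mul_zero, zero_mul, add_zero] at h
  refine h.congr (fun s hs => ?_) ?_
  · linarith [hsol.mass s hs]
  · linarith [hsol.mass t ht]

lemma continuousOn_integral (hsol : WeakSolLSN d M ε i0 V u) :
    ContinuousOn (fun t => ∫ x in Ioi (0:ℝ), u t x) (Ici 0) := fun t ht => by
  simpa using (hsol.weak _ _ isTest_one t ht).continuousWithinAt

lemma d_zero_lt {d' : ℝ → ℝ} {α β : ℝ} (hD : DPlus d d' α β) (hsol : WeakSolLSN d M ε i0 V u)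
    (hV0 : d 0 < V 0) {t : ℝ} (ht : t ∈ Ici 0) : d 0 < V t := by
  have hdrift : ∀ s ∈ Ici (0:ℝ), -(∫ x in Ioi (0:ℝ), u s x) * (V s - d 0) ≤
      -∫ x in Ioi (0:ℝ), (V s - d x) * u s x := fun s hs => by
    rw [neg_mul, neg_le_neg_iff, mul_comm, ← integral_const_mul]
    refine setIntegral_mono_on (hsol.integrableOn_sub_mul hD hs)
      ((hsol.integrableOn hs).const_mul _) measurableSet_Ioi fun x hx => ?_
    have hd := hD.monotoneOn self_mem_Ici (Ioi_subset_Ici_self hx) (Ioi_subset_Ici_self hx)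
    nlinarith [hsol.u_nonneg s hs x (Ioi_subset_Ici_self hx)]
  have h := pos_of_neg_mul_le_hasDerivWithinAt hsol.continuousOn_integral
    (fun s hs => (hsol.hasDerivWithinAt_V hs).sub_const (d 0)) hdrift (sub_pos.2 hV0) ht
  linarith

lemma hasDerivWithinAt_integral {k k' : ℝ → ℝ} (hsol : WeakSolLSN d M ε i0 V u)
    (hk : IsTest k k') (hε : ε = 0 ∨ ε = 1) (hk0 : ε = 1 → k 0 = 0) {t : ℝ} (ht : t ∈ Ici 0) :
    HasDerivWithinAt (fun s => ∫ x in Ioi (0:ℝ), k x * u s x)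
      (∫ x in Ioi (0:ℝ), k' x * (V t - d x) * u t x) (Ici 0) t := by
  have hnucl : ε * k 0 * V t ^ i0 = 0 := by
    rcases hε with h | h
    · simp [h]
    · simp [hk0 h]
  simpa [hnucl] using hsol.weak k k' hk t ht

end WeakSolLSN

theorem LS_entropy_Hk_general
    (d d' : ℝ → ℝ) (α β : ℝ) (hD : DPlus d d' α β)
    (dinv : ℝ → ℝ)
    (hdinv_right : ∀ v ∈ Ici (d 0), 0 ≤ dinv v ∧ d (dinv v) = v)
    (M ε : ℝ) (i0 : ℕ) (hε : ε = 0 ∨ ε = 1)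
    (V : ℝ → ℝ) (u : ℝ → ℝ → ℝ)
    (hsol : WeakSolLSN d M ε i0 V u)
    (hV0 : d 0 < V 0)
    (k k' : ℝ → ℝ)
    (hk_test : IsTest k k')
    (hk_convex : ConvexOn ℝ (Ici 0) k)
    (hk0 : ε = 1 → k 0 = 0) :
    ∀ t ∈ Ici (0:ℝ),
      HasDerivWithinAt
        (fun s => (∫ x in Ioi (0:ℝ), k x * u s x) + ∫ v in (d 0)..(V s), k' (dinv v))
        (∫ x in Ioi (0:ℝ), u t x * (V t - d x) * (k' x - k' (dinv (V t))))
        (Ici 0) t ∧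
      (∫ x in Ioi (0:ℝ), u t x * (V t - d x) * (k' x - k' (dinv (V t)))) ≤ 0 := by
  intro t ht
  have ⟨hk_deriv, hk'_cont, C, hC⟩ := hk_test
  have hVt := hsol.d_zero_lt hD hV0 ht
  obtain ⟨hy0, hdy⟩ := hdinv_right (V t) hVt.le
  have hK := (hsol.hasDerivWithinAt_V ht).intervalIntegral_comp
    (hk'_cont.comp (hD.continuousOn_dinv hdinv_right) fun v hv => (hdinv_right v hv).1) hVt
  have hk'_mono := hk_convex.monotoneOn_of_hasDerivWithinAt hk_deriv
  have hsplit : (∫ x in Ioi (0:ℝ), u t x * (V t - d x) * (k' x - k' (dinv (V t)))) =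
      (∫ x in Ioi (0:ℝ), k' x * (V t - d x) * u t x) +
        k' (dinv (V t)) * -∫ x in Ioi (0:ℝ), (V t - d x) * u t x := by
    rw [mul_neg, ← integral_const_mul, ← sub_eq_add_neg, ← integral_sub]
    · congr 1 with x; ring
    · exact hsol.integrableOn_drift hD ht hk'_cont fun x hx => (hC x hx).2
    · exact (hsol.integrableOn_sub_mul hD ht).const_mul _
  refine ⟨hsplit ▸ (hsol.hasDerivWithinAt_integral hk_test hε hk0 ht).add hK,
    setIntegral_nonpos measurableSet_Ioi fun x hx => ?_⟩
  have hx0 : x ∈ Ici 0 := Ioi_subset_Ici_self hx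
  have hsign := (hD.monotoneOn.monovaryOn hk'_mono).sub_mul_sub_nonneg hy0 hx0
  rw [hdy] at hsign
  nlinarith [mul_nonneg (hsol.u_nonneg t ht x hx0) hsign]

/-- Lemma 2.4, entropy inequality adapted from Collet et al.:
under (D+), for a weak solution of the Lifshitz–Slyozov system (`ε = 0`) or with
nucleation (`ε = 1`), with total mass `M` and `V₀ > d(0)`, and for any nonnegative convex
C¹ function `k` with `|k(x)| ≤ C(1+x²)`, `|k'(x)| ≤ C(1+x)` (and `k(0) = 0` in the
nucleation case), the functional
`H_k(t) = ∫₀^∞ k(x)u(t,x)dx + ∫_{d(0)}^{V(t)} k'(d⁻¹(s)) ds`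
is differentiable with
`H_k'(t) = ∫₀^∞ u(t,x)(V(t)−d(x))(k'(x) − k'(d⁻¹(V(t)))) dx ≤ 0`.
Here `dinv` is the inverse of `d : [0,∞) → [d(0),∞)`. -/
theorem LS_entropy_Hk
    (d d' : ℝ → ℝ) (α β : ℝ) (hD : DPlus d d' α β)
    (dinv : ℝ → ℝ)
    (hdinv_left : ∀ x ∈ Ici (0:ℝ), dinv (d x) = x)
    (hdinv_right : ∀ v ∈ Ici (d 0), 0 ≤ dinv v ∧ d (dinv v) = v)
    (M ε : ℝ) (i0 : ℕ) (hε : ε = 0 ∨ ε = 1) (hi0 : 1 ≤ i0)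
    (hM : 0 < M)
    (V : ℝ → ℝ) (u : ℝ → ℝ → ℝ)
    (hsol : WeakSolLSN d M ε i0 V u)
    (hV0 : d 0 < V 0)
    (k k' : ℝ → ℝ)
    (hk_test : IsTest k k')
    (hk_nonneg : ∀ x ∈ Ici (0:ℝ), 0 ≤ k x)
    (hk_convex : ConvexOn ℝ (Ici 0) k)
    (hk0 : ε = 1 → k 0 = 0) :
    ∀ t ∈ Ici (0:ℝ),
      HasDerivWithinAt
        (fun s => (∫ x in Ioi (0:ℝ), k x * u s x) + ∫ v in (d 0)..(V s), k' (dinv v))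
        (∫ x in Ioi (0:ℝ), u t x * (V t - d x) * (k' x - k' (dinv (V t))))
        (Ici 0) t ∧
      (∫ x in Ioi (0:ℝ), u t x * (V t - d x) * (k' x - k' (dinv (V t)))) ≤ 0 :=
  LS_entropy_Hk_general d d' α β hD dinv hdinv_right M ε i0 hε V u hsol hV0 k k' hk_test hk_convex
    hk0
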